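/- Conversely, if an open set U ⊆ ℝⁿ satisfies uniform interior and exterior cone conditions near a boundary point x (there exist δ > 0 and an open cone C̊ with axis k such that for all z ∈ ∂U ∩ B(x,δ), (z − C̊) ∩ B(x,δ) ⊆ U and (z + C̊) ∩ B(x,δ) ⊆ ℝⁿ \ closure(U)), then ∂U is locally the graph of a Lipschitz function: there exist δ' > 0 and a Lipschitz function f: k⊥ → ℝ such that for y ∈ B(x, δ'), y ∈ U iff k·(y−x) < f(P_k(y−x)), where P_k is orthogonal projection onto k⊥. -/

import Mathlib

open Set Topology

/-- Append a last coordinate to a vector of `ℝⁿ`, giving a vector of `ℝⁿ⁺¹`. -/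
noncomputable def snocE {n : ℕ} (v : EuclideanSpace ℝ (Fin n)) (a : ℝ) :
    EuclideanSpace ℝ (Fin (n + 1)) :=
  WithLp.toLp 2 (Fin.snoc (fun j => v j) a : Fin (n + 1) → ℝ)

/-- Projection of `ℝⁿ⁺¹` onto the first `n` coordinates. -/
noncomputable def projE {n : ℕ} (y : EuclideanSpace ℝ (Fin (n + 1))) :
    EuclideanSpace ℝ (Fin n) :=
  WithLp.toLp 2 (fun i : Fin n => y i.castSucc)

/-- The open cone `C̊ = ℝ_{>0} · (B_{ℝⁿ}(0,1) × {K})` with axis the last coordinate. -/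
def coneSet (n : ℕ) (K : ℝ) : Set (EuclideanSpace ℝ (Fin (n + 1))) :=
  {c | ∃ t : ℝ, 0 < t ∧ ∃ v : EuclideanSpace ℝ (Fin n), ‖v‖ < 1 ∧ c = t • snocE v K}

/-!
The exterior cone at a boundary point `z` contains every point lying higher than `z` by more than
`K` times their horizontal distance, so any two boundary points in the ball satisfy
`|Δ height| ≤ K · |Δ horizontal|`. The two cones at `x` put the bottom of each short vertical
segment over `w` in `U` and its top outside `closure U`; by connectedness the segment meets `∂U`,
and the vertical directions of the cones at that crossing show that `U` is exactly the part of
the line below it. The crossing height is thus a `K`-Lipschitz function of `w` on a small ball,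
and McShane's extension makes it globally Lipschitz.
-/

theorem IsPreconnected.inter_frontier_nonempty {X : Type*} [TopologicalSpace X] {s U : Set X}
    (hs : IsPreconnected s) (hin : (s ∩ interior U).Nonempty) (hout : (s \ closure U).Nonempty) :
    (s ∩ frontier U).Nonempty := by
  by_contra hempty
  have hcover : s ⊆ interior U ∪ (closure U)ᶜ := fun y hy => by
    by_contra hy'
    simp only [mem_union, mem_compl_iff, not_or, not_not] at hy'
    exact hempty ⟨y, hy, hy'.2, hy'.1⟩
  obtain ⟨y, -, hyin, hyout⟩ := hs _ _ isOpen_interior isClosed_closure.isOpen_compl hcover hin hout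
  exact hyout (interior_subset_closure hyin)

variable {n : ℕ}

@[simp] lemma snocE_last (v : EuclideanSpace ℝ (Fin n)) (a : ℝ) : snocE v a (Fin.last n) = a := by
  simp [snocE]

@[simp] lemma snocE_castSucc (v : EuclideanSpace ℝ (Fin n)) (a : ℝ) (i : Fin n) :
    snocE v a i.castSucc = v i := by
  simp [snocE]

@[simp] lemma projE_apply (y : EuclideanSpace ℝ (Fin (n + 1))) (i : Fin n) :
    projE y i = y i.castSucc := rfl

@[simp] lemma projE_snocE (v : EuclideanSpace ℝ (Fin n)) (a : ℝ) : projE (snocE v a) = v := by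
  ext i; simp

@[simp] lemma projE_add (y z : EuclideanSpace ℝ (Fin (n + 1))) :
    projE (y + z) = projE y + projE z := rfl

@[simp] lemma projE_sub (y z : EuclideanSpace ℝ (Fin (n + 1))) :
    projE (y - z) = projE y - projE z := rfl

@[simp] lemma projE_neg (y : EuclideanSpace ℝ (Fin (n + 1))) : projE (-y) = -projE y := rfl

@[simp] lemma projE_smul (t : ℝ) (y : EuclideanSpace ℝ (Fin (n + 1))) :
    projE (t • y) = t • projE y := rfl

lemma snocE_projE (y : EuclideanSpace ℝ (Fin (n + 1))) : snocE (projE y) (y (Fin.last n)) = y := by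
  ext i
  induction i using Fin.lastCases <;> simp

@[simp] lemma snocE_zero : snocE (0 : EuclideanSpace ℝ (Fin n)) 0 = 0 := by
  ext i
  induction i using Fin.lastCases <;> simp

lemma ext_projE_last {y z : EuclideanSpace ℝ (Fin (n + 1))} (hproj : projE y = projE z)
    (hlast : y (Fin.last n) = z (Fin.last n)) : y = z := by
  rw [← snocE_projE y, ← snocE_projE z, hproj, hlast]

lemma continuous_snocE (v : EuclideanSpace ℝ (Fin n)) : Continuous (snocE v) :=
  (PiLp.continuous_toLp 2 _).comp (continuous_const.finSnoc continuous_id)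

lemma norm_snocE_le (v : EuclideanSpace ℝ (Fin n)) (a : ℝ) : ‖snocE v a‖ ≤ ‖v‖ + |a| := by
  have hsq : ‖snocE v a‖ ^ 2 = ‖v‖ ^ 2 + a ^ 2 := by
    rw [EuclideanSpace.norm_eq, EuclideanSpace.norm_eq, Real.sq_sqrt (by positivity),
      Real.sq_sqrt (by positivity), Fin.sum_univ_castSucc]
    simp
  nlinarith [norm_nonneg (snocE v a), norm_nonneg v, abs_nonneg a, sq_abs a]

lemma norm_projE_le (y : EuclideanSpace ℝ (Fin (n + 1))) : ‖projE y‖ ≤ ‖y‖ := by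
  rw [EuclideanSpace.norm_eq, EuclideanSpace.norm_eq, Fin.sum_univ_castSucc]
  gcongr
  simp only [projE_apply, le_add_iff_nonneg_right]
  positivity

lemma mem_coneSet_iff {K : ℝ} (hK : 0 < K) {c : EuclideanSpace ℝ (Fin (n + 1))} :
    c ∈ coneSet n K ↔ K * ‖projE c‖ < c (Fin.last n) := by
  constructor
  · rintro ⟨t, ht, v, hv, rfl⟩
    simp only [projE_smul, projE_snocE, norm_smul, Real.norm_of_nonneg ht.le, PiLp.smul_apply,
      snocE_last, smul_eq_mul]
    nlinarith [mul_pos ht hK]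
  · intro hlt
    have hc : 0 < c (Fin.last n) := (by positivity : 0 ≤ K * ‖projE c‖).trans_lt hlt
    refine ⟨c (Fin.last n) / K, by positivity, (K / c (Fin.last n)) • projE c, ?_, ?_⟩
    · rw [norm_smul, Real.norm_of_nonneg (by positivity), div_mul_eq_mul_div, div_lt_one hc]
      exact hlt
    · ext i
      induction i using Fin.lastCases <;> simp <;> field_simp

def UniformConeCondition (U : Set (EuclideanSpace ℝ (Fin (n + 1))))
    (x : EuclideanSpace ℝ (Fin (n + 1))) (δ K : ℝ) : Prop :=
  ∀ z ∈ frontier U ∩ Metric.ball x δ,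
    ((fun c => z - c) '' coneSet n K) ∩ Metric.ball x δ ⊆ U ∧
    ((fun c => z + c) '' coneSet n K) ∩ Metric.ball x δ ⊆ (closure U)ᶜ

namespace UniformConeCondition

variable {U : Set (EuclideanSpace ℝ (Fin (n + 1)))} {x : EuclideanSpace ℝ (Fin (n + 1))} {δ K : ℝ}

lemma mem_of_sub_mem_coneSet (hcone : UniformConeCondition U x δ K)
    {z y : EuclideanSpace ℝ (Fin (n + 1))} (hz : z ∈ frontier U ∩ Metric.ball x δ)
    (hy : y ∈ Metric.ball x δ) (hzy : z - y ∈ coneSet n K) : y ∈ U :=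
  (hcone z hz).1 ⟨⟨z - y, hzy, sub_sub_cancel z y⟩, hy⟩

lemma notMem_closure_of_sub_mem_coneSet (hcone : UniformConeCondition U x δ K)
    {z y : EuclideanSpace ℝ (Fin (n + 1))} (hz : z ∈ frontier U ∩ Metric.ball x δ)
    (hy : y ∈ Metric.ball x δ) (hyz : y - z ∈ coneSet n K) : y ∉ closure U :=
  (hcone z hz).2 ⟨⟨y - z, hyz, add_sub_cancel z y⟩, hy⟩

lemma last_sub_le (hK : 0 < K) (hcone : UniformConeCondition U x δ K)
    {z z' : EuclideanSpace ℝ (Fin (n + 1))} (hz : z ∈ frontier U ∩ Metric.ball x δ)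
    (hz' : z' ∈ frontier U ∩ Metric.ball x δ) :
    z' (Fin.last n) - z (Fin.last n) ≤ K * ‖projE (z' - z)‖ := by
  by_contra! hlt
  exact hcone.notMem_closure_of_sub_mem_coneSet hz hz'.2 ((mem_coneSet_iff hK).2 hlt)
    (frontier_subset_closure hz'.1)

lemma dist_le_of_mem_frontier (hK : 0 < K) (hcone : UniformConeCondition U x δ K)
    {w w' : EuclideanSpace ℝ (Fin n)} {a a' : ℝ}
    (h : x + snocE w a ∈ frontier U ∩ Metric.ball x δ)
    (h' : x + snocE w' a' ∈ frontier U ∩ Metric.ball x δ) :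
    dist a a' ≤ K * dist w w' := by
  have h₁ := hcone.last_sub_le hK h h'
  have h₂ := hcone.last_sub_le hK h' h
  simp only [projE_sub, projE_snocE, add_sub_add_left_eq_sub, PiLp.add_apply,
    snocE_last] at h₁ h₂
  rw [Real.dist_eq, dist_eq_norm, abs_sub_le_iff]
  rw [norm_sub_rev] at h₁
  constructor <;> linarith

lemma mem_iff_last_lt (hU : IsOpen U) (hK : 0 < K) (hcone : UniformConeCondition U x δ K)
    {z y : EuclideanSpace ℝ (Fin (n + 1))} (hz : z ∈ frontier U ∩ Metric.ball x δ)
    (hy : y ∈ Metric.ball x δ) (hproj : projE y = projE z) :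
    y ∈ U ↔ y (Fin.last n) < z (Fin.last n) := by
  have hvert : ∀ c d : EuclideanSpace ℝ (Fin (n + 1)), projE c = projE d →
      (c - d ∈ coneSet n K ↔ d (Fin.last n) < c (Fin.last n)) := fun c d hcd => by
    rw [mem_coneSet_iff hK, projE_sub, hcd, sub_self, norm_zero, mul_zero, PiLp.sub_apply, sub_pos]
  refine ⟨fun hyU => ?_, fun hlt =>
    hcone.mem_of_sub_mem_coneSet hz hy ((hvert z y hproj.symm).2 hlt)⟩
  rcases lt_trichotomy (y (Fin.last n)) (z (Fin.last n)) with hlt | heq | hgt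
  · exact hlt
  · rw [ext_projE_last hproj heq, ← hU.interior_eq] at hyU
    exact absurd hyU hz.1.2
  · exact absurd (subset_closure hyU)
      (hcone.notMem_closure_of_sub_mem_coneSet hz hy ((hvert y z hproj).2 hgt))

lemma exists_mem_frontier_snocE (hU : IsOpen U) (hx : x ∈ frontier U) (hδ : 0 < δ) (hK : 0 < K)
    (hcone : UniformConeCondition U x δ K) {w : EuclideanSpace ℝ (Fin n)} {h : ℝ}
    (hwh : K * ‖w‖ < h) (hδwh : ‖w‖ + h < δ) :
    ∃ t, x + snocE w t ∈ frontier U ∩ Metric.ball x δ := by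
  have hseg : (fun t => x + snocE w t) '' Icc (-h) h ⊆ Metric.ball x δ := by
    rintro _ ⟨t, ht, rfl⟩
    rw [Metric.mem_ball, dist_self_add_left]
    exact (norm_snocE_le w t).trans_lt (by linarith [abs_le.2 ht])
  have hh : -h ≤ h := by linarith [mul_nonneg hK.le (norm_nonneg w)]
  have hx' : x ∈ frontier U ∩ Metric.ball x δ := ⟨hx, Metric.mem_ball_self hδ⟩
  have hbot : x + snocE w (-h) ∈ U :=
    hcone.mem_of_sub_mem_coneSet hx' (hseg (mem_image_of_mem _ (left_mem_Icc.2 hh)))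
      (by simpa [mem_coneSet_iff hK] using hwh)
  have htop : x + snocE w h ∉ closure U :=
    hcone.notMem_closure_of_sub_mem_coneSet hx' (hseg (mem_image_of_mem _ (right_mem_Icc.2 hh)))
      (by simpa [mem_coneSet_iff hK] using hwh)
  have hconn : IsPreconnected ((fun t => x + snocE w t) '' Icc (-h) h) :=
    isPreconnected_Icc.image _ (continuous_const.add (continuous_snocE w)).continuousOn
  obtain ⟨_, ⟨t, ht, rfl⟩, hfr⟩ := hconn.inter_frontier_nonempty
    ⟨_, mem_image_of_mem _ (left_mem_Icc.2 hh), hU.interior_eq.symm ▸ hbot⟩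
    ⟨_, mem_image_of_mem _ (right_mem_Icc.2 hh), htop⟩
  exact ⟨t, hfr, hseg (mem_image_of_mem _ ht)⟩

end UniformConeCondition

/-- Conversely, uniform interior and exterior cone conditions near a boundary point `x`
imply that `∂U` is locally the graph of a Lipschitz function: for suitable `δ' > 0` and
Lipschitz `f`, for `y ∈ B(x,δ')` one has `y ∈ U ↔ (y−x)ⁿ < f(P(y−x))` (axis `k` taken to be
the last coordinate direction). -/
theorem proper_cones_imply_lipschitz_graph {n : ℕ}
    (U : Set (EuclideanSpace ℝ (Fin (n + 1)))) (hU : IsOpen U)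
    (x : EuclideanSpace ℝ (Fin (n + 1))) (hx : x ∈ frontier U)
    (δ K : ℝ) (hδ : 0 < δ) (hK : 0 < K)
    (hcone : ∀ z ∈ frontier U ∩ Metric.ball x δ,
      ((fun c => z - c) '' coneSet n K) ∩ Metric.ball x δ ⊆ U ∧
      ((fun c => z + c) '' coneSet n K) ∩ Metric.ball x δ ⊆ (closure U)ᶜ) :
    ∃ δ' : ℝ, 0 < δ' ∧ ∃ (L : NNReal) (f : EuclideanSpace ℝ (Fin n) → ℝ),
      LipschitzWith L f ∧ f 0 = 0 ∧
      ∀ y : EuclideanSpace ℝ (Fin (n + 1)), dist y x < δ' →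
        (y ∈ U ↔ y (Fin.last n) - x (Fin.last n) < f (projE (y - x))) := by
  replace hcone : UniformConeCondition U x δ K := hcone
  -- `r + K r = δ` keeps the segments `{w} × [-K r, K r]`, `‖w‖ < r`, inside the δ-ball.
  set r := δ / (1 + K) with hr_def
  have hr : 0 < r := by positivity
  have hrδ : r + K * r = δ := by rw [hr_def]; field_simp
  have hexists : ∀ w ∈ Metric.ball (0 : EuclideanSpace ℝ (Fin n)) r,
      ∃ t, x + snocE w t ∈ frontier U ∩ Metric.ball x δ := fun w hw => by
    rw [mem_ball_zero_iff] at hw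
    exact hcone.exists_mem_frontier_snocE hU hx hδ hK (h := K * r) (by gcongr) (by linarith)
  choose! g hg using hexists
  have hx₀ : x + snocE 0 0 ∈ frontier U ∩ Metric.ball x δ := by simpa using ⟨hx, hδ⟩
  have hg_lip : LipschitzOnWith K.toNNReal g (Metric.ball 0 r) :=
    LipschitzOnWith.of_dist_le_mul fun w hw w' hw' => by
      simpa [Real.coe_toNNReal _ hK.le] using hcone.dist_le_of_mem_frontier hK (hg w hw) (hg w' hw')
  obtain ⟨f, hf, hfg⟩ := hg_lip.extend_real
  refine ⟨r, hr, K.toNNReal, f, hf, ?_, fun y hy => ?_⟩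
  · -- `x` and the chosen crossing over `0` are boundary points on the same vertical line.
    rw [← hfg (Metric.mem_ball_self hr)]
    simpa using hcone.dist_le_of_mem_frontier hK (hg 0 (Metric.mem_ball_self hr)) hx₀
  · have hw : projE (y - x) ∈ Metric.ball 0 r := by
      rw [mem_ball_zero_iff]
      exact (norm_projE_le _).trans_lt (by rwa [← dist_eq_norm])
    have hy' : y ∈ Metric.ball x δ := Metric.ball_subset_ball (by nlinarith) hy
    rw [← hfg hw, hcone.mem_iff_last_lt hU hK (hg _ hw) hy' (by simp), PiLp.add_apply, snocE_last,
      sub_lt_iff_lt_add']
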